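/- Let N ≥ 7 be an integer and define g(t) = γ₃(t) − 2·τ(t)² for t ∈ (0,1). Then g is strictly increasing on (0,1), g(t) → −∞ as t → 0⁺, g(t) → +∞ as t → 1⁻, and g(1/2) < 0. Consequently there exists a unique t₂* ∈ (0,1) with g(t₂*) = 0; it satisfies t₂* > 1/2 and g(t) > 0 for all t ∈ (t₂*,1). -/

import Mathlib

open Real Filter Set

/-- `τ(t) = t^{-(N-2)} − 1`. -/
noncomputable def tau (N : ℕ) (t : ℝ) : ℝ := t ^ (-((N : ℝ) - 2)) - 1

/-- `γ₃(t) = (1−t²)^{-(N−2)} − (2t)^{-(N−2)} + (t²+1)^{-(N−2)}`. -/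
noncomputable def gamma3 (N : ℕ) (t : ℝ) : ℝ :=
  (1 - t ^ 2) ^ (-((N : ℝ) - 2)) - (2 * t) ^ (-((N : ℝ) - 2)) +
    (t ^ 2 + 1) ^ (-((N : ℝ) - 2))

/-- `g(t) = γ₃(t) − 2τ(t)²`. -/
noncomputable def gFun (N : ℕ) (t : ℝ) : ℝ := gamma3 N t - 2 * (tau N t) ^ 2

noncomputable def Gf (p : ℕ) (t : ℝ) : ℝ :=
  ((1 - t ^ 2) ^ p)⁻¹ - ((2 * t) ^ p)⁻¹ + ((t ^ 2 + 1) ^ p)⁻¹ - 2 * ((t ^ p)⁻¹ - 1) ^ 2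

lemma rpow_key {N : ℕ} (hN : 7 ≤ N) {x : ℝ} (hx : 0 < x) :
    x ^ (-((N : ℝ) - 2)) = ((x ^ (N - 2)) : ℝ)⁻¹ := by
  have h : 2 ≤ N := by omega
  have h2 : ((N : ℝ) - 2) = ((N - 2 : ℕ) : ℝ) := by
    rw [Nat.cast_sub h]; norm_num
  rw [h2, Real.rpow_neg hx.le, Real.rpow_natCast]

lemma gfun_eq {N : ℕ} (hN : 7 ≤ N) {t : ℝ} (ht : t ∈ Ioo (0:ℝ) 1) :
    gFun N t = Gf (N - 2) t := by
  obtain ⟨h0, h1⟩ := ht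
  have ht2 : (0:ℝ) < 1 - t ^ 2 := by nlinarith
  have h2t : (0:ℝ) < 2 * t := by linarith
  have ht21 : (0:ℝ) < t ^ 2 + 1 := by positivity
  simp only [gFun, gamma3, tau, Gf, rpow_key hN ht2, rpow_key hN h2t, rpow_key hN ht21,
    rpow_key hN h0]

lemma fConvex (p : ℕ) : ConvexOn ℝ (Ioi 0) (fun x : ℝ => ((x ^ p)⁻¹)) := by
  have h : ConvexOn ℝ (Ioi 0) (fun x : ℝ => x ^ (-(p:ℤ))) := convexOn_zpow _
  convert h using 2 with x
  rw [zpow_neg, zpow_natCast]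

lemma four_point {p : ℕ} {x u v z : ℝ} (hx : 0 < x) (hxu : x ≤ u) (huz : u ≤ z)
    (hxv : x ≤ v) (hsum : u + v = x + z) :
    ((u ^ p)⁻¹ : ℝ) + (v ^ p)⁻¹ ≤ (x ^ p)⁻¹ + (z ^ p)⁻¹ := by
  rcases eq_or_lt_of_le (hxu.trans huz) with h | hxz
  · have hux : u = x := le_antisymm (huz.trans h.symm.le) hxu
    have hvx : v = x := by linarith
    rw [hux, hvx, ← h]
  · set θ : ℝ := (z - u) / (z - x) with hθdef
    have hzx : 0 < z - x := by linarith
    have hθ0 : 0 ≤ θ := div_nonneg (by linarith) hzx.le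
    have hθ1 : θ ≤ 1 := (div_le_one hzx).2 (by linarith)
    have hf := fConvex p
    have hmemx : x ∈ Ioi (0:ℝ) := hx
    have hmemz : z ∈ Ioi (0:ℝ) := by simp only [mem_Ioi]; linarith
    have hu := hf.2 hmemx hmemz (show (0:ℝ) ≤ θ from hθ0)
      (show (0:ℝ) ≤ 1 - θ by linarith) (show θ + (1 - θ) = 1 by ring)
    have hv := hf.2 hmemx hmemz (show (0:ℝ) ≤ 1 - θ by linarith)
      (show (0:ℝ) ≤ θ from hθ0) (show (1 - θ) + θ = 1 by ring)
    have hueq : θ * x + (1 - θ) * z = u := by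
      rw [hθdef]; field_simp; ring
    have hveq : (1 - θ) * x + θ * z = v := by
      have : v = x + z - u := by linarith
      rw [this, hθdef]; field_simp; ring
    simp only [smul_eq_mul] at hu hv
    rw [hueq] at hu
    rw [hveq] at hv
    linarith

lemma fanti {p : ℕ} (hp : 1 ≤ p) {a b : ℝ} (ha : 0 < a) (hab : a < b) :
    ((b ^ p)⁻¹ : ℝ) < (a ^ p)⁻¹ := by
  have h1 : (0:ℝ) < a ^ p := pow_pos ha p
  have h2 : a ^ p < b ^ p := pow_lt_pow_left₀ hab ha.le (by omega)
  exact inv_strictAnti₀ h1 h2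

lemma Gf_mono {p : ℕ} (hp : 1 ≤ p) : StrictMonoOn (Gf p) (Ioo (0:ℝ) 1) := by
  rintro s ⟨hs0, hs1⟩ t ⟨ht0, ht1⟩ hst
  have hA : ((1 - s ^ 2) ^ p)⁻¹ < ((1 - t ^ 2) ^ p)⁻¹ :=
    fanti hp (by nlinarith) (by nlinarith)
  -- tau part
  have hτlt : ((t ^ p)⁻¹ : ℝ) < (s ^ p)⁻¹ := fanti hp hs0 hst
  have hτ1 : (1:ℝ) ≤ (t ^ p)⁻¹ := by
    rw [one_le_inv_iff₀]
    exact ⟨pow_pos ht0 p, pow_le_one₀ ht0.le ht1.le⟩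
  have hC : ((t ^ p)⁻¹ - 1) ^ 2 < ((s ^ p)⁻¹ - 1) ^ 2 :=
    pow_lt_pow_left₀ (by linarith) (by linarith) (by norm_num)
  -- B part via convexity
  set u : ℝ := 2 * s + (t ^ 2 - s ^ 2) with hu
  have h4 : ((u ^ p)⁻¹ : ℝ) + ((s ^ 2 + 1) ^ p)⁻¹ ≤ ((2 * s) ^ p)⁻¹ + ((t ^ 2 + 1) ^ p)⁻¹ :=
    four_point (by linarith) (by nlinarith) (by nlinarith) (by nlinarith) (by ring)
  have hfu : (((2 * t) ^ p)⁻¹ : ℝ) < (u ^ p)⁻¹ :=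
    fanti hp (by nlinarith) (by nlinarith)
  have hB : ((2 * t) ^ p)⁻¹ + ((s ^ 2 + 1) ^ p)⁻¹ < ((2 * s) ^ p)⁻¹ + ((t ^ 2 + 1) ^ p)⁻¹ := by
    linarith
  simp only [Gf]
  linarith

lemma inv_pow_tendsto_atTop {p : ℕ} (hp : 1 ≤ p) {b : ℝ → ℝ} {l : Filter ℝ}
    (hb : Tendsto b l (nhdsWithin 0 (Ioi 0))) :
    Tendsto (fun t => ((b t) ^ p)⁻¹) l atTop := by
  apply Filter.Tendsto.inv_tendsto_nhdsGT_zero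
  rw [tendsto_nhdsWithin_iff]
  constructor
  · have hb' : Tendsto b l (nhds 0) := hb.mono_right nhdsWithin_le_nhds
    have := hb'.pow p
    rwa [zero_pow (by omega)] at this
  · filter_upwards [hb self_mem_nhdsWithin] with t ht
    simp only [mem_Ioi] at ht ⊢
    exact pow_pos ht p

lemma Gf_cont (p : ℕ) : ContinuousOn (Gf p) (Ioo (0:ℝ) 1) := by
  have h1 : ∀ t ∈ Ioo (0:ℝ) 1, (1 - t ^ 2) ^ p ≠ 0 := fun t ⟨h0, h1⟩ =>
    pow_ne_zero p (by nlinarith)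
  have h2 : ∀ t ∈ Ioo (0:ℝ) 1, (2 * t) ^ p ≠ 0 := fun t ⟨h0, h1⟩ =>
    pow_ne_zero p (by linarith)
  have h3 : ∀ t ∈ Ioo (0:ℝ) 1, (t ^ 2 + 1) ^ p ≠ 0 := fun t ⟨h0, h1⟩ =>
    pow_ne_zero p (by positivity)
  have h4 : ∀ t ∈ Ioo (0:ℝ) 1, t ^ p ≠ 0 := fun t ⟨h0, h1⟩ =>
    pow_ne_zero p (by linarith)
  unfold Gf
  apply ContinuousOn.sub
  apply ContinuousOn.add
  apply ContinuousOn.sub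
  · exact ContinuousOn.inv₀ (by fun_prop) h1
  · exact ContinuousOn.inv₀ (by fun_prop) h2
  · exact ContinuousOn.inv₀ (by fun_prop) h3
  · exact continuousOn_const.mul (((ContinuousOn.inv₀ (by fun_prop) h4).sub
      continuousOn_const).pow 2)

lemma Gf_bot {p : ℕ} (hp : 1 ≤ p) : Tendsto (Gf p) (nhdsWithin 0 (Ioi 0)) atBot := by
  set l := nhdsWithin (0:ℝ) (Ioi 0)
  have hmem : Tendsto (fun t : ℝ => t) l (nhdsWithin 0 (Ioi 0)) := tendsto_id
  have h2t : Tendsto (fun t : ℝ => 2 * t) l (nhdsWithin 0 (Ioi 0)) := by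
    rw [tendsto_nhdsWithin_iff]
    constructor
    · have : Tendsto (fun t : ℝ => 2 * t) (nhds 0) (nhds (2 * 0)) :=
        (continuous_const.mul continuous_id).tendsto 0
      simpa using this.mono_left nhdsWithin_le_nhds
    · filter_upwards [self_mem_nhdsWithin] with t ht
      exact mul_pos two_pos (mem_Ioi.mp ht)
  have hE : Tendsto (fun t : ℝ => ((2 * t) ^ p)⁻¹) l atTop := inv_pow_tendsto_atTop hp h2t
  have hT : Tendsto (fun t : ℝ => (t ^ p)⁻¹) l atTop := inv_pow_tendsto_atTop hp hmem
  have hT1 : Tendsto (fun t : ℝ => (t ^ p)⁻¹ - 1) l atTop :=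
    tendsto_atTop_add_const_right l (-1) hT
  have hF : Tendsto (fun t : ℝ => 2 * (((t ^ p)⁻¹ - 1) * ((t ^ p)⁻¹ - 1))) l atTop := by
    apply Tendsto.const_mul_atTop (by norm_num : (0:ℝ) < 2) (hT1.atTop_mul_atTop₀ hT1)
  have hA : Tendsto (fun t : ℝ => ((1 - t ^ 2) ^ p)⁻¹) l (nhds 1) := by
    have hc : ContinuousAt (fun t : ℝ => ((1 - t ^ 2) ^ p)⁻¹) 0 := by
      apply ContinuousAt.inv₀ (by fun_prop)
      norm_num
    have := hc.tendsto.mono_left (nhdsWithin_le_nhds (a := (0:ℝ)) (s := Ioi 0))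
    simpa using this
  have hD : Tendsto (fun t : ℝ => ((t ^ 2 + 1) ^ p)⁻¹) l (nhds 1) := by
    have hc : ContinuousAt (fun t : ℝ => ((t ^ 2 + 1) ^ p)⁻¹) 0 := by
      apply ContinuousAt.inv₀ (by fun_prop)
      norm_num
    have := hc.tendsto.mono_left (nhdsWithin_le_nhds (a := (0:ℝ)) (s := Ioi 0))
    simpa using this
  have hcomb : Tendsto (fun t : ℝ => (((1 - t ^ 2) ^ p)⁻¹ + ((t ^ 2 + 1) ^ p)⁻¹) +
      (-(((2 * t) ^ p)⁻¹ + 2 * (((t ^ p)⁻¹ - 1) * ((t ^ p)⁻¹ - 1))))) l atBot :=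
    (hA.add hD).add_atBot (tendsto_neg_atTop_atBot.comp (Filter.Tendsto.atTop_add_atTop hE hF))
  exact hcomb.congr (fun t => by simp only [Gf]; ring)

lemma Gf_top {p : ℕ} (hp : 1 ≤ p) : Tendsto (Gf p) (nhdsWithin 1 (Iio 1)) atTop := by
  set l := nhdsWithin (1:ℝ) (Iio 1)
  have hb : Tendsto (fun t : ℝ => 1 - t ^ 2) l (nhdsWithin 0 (Ioi 0)) := by
    rw [tendsto_nhdsWithin_iff]
    constructor
    · have : Tendsto (fun t : ℝ => 1 - t ^ 2) (nhds 1) (nhds (1 - 1 ^ 2)) :=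
        ((continuous_const.sub (continuous_pow 2)).tendsto 1)
      simpa using this.mono_left nhdsWithin_le_nhds
    · have hpos : ∀ᶠ t in l, (0:ℝ) < t := by
        apply eventually_nhdsWithin_of_eventually_nhds
        filter_upwards [Ioi_mem_nhds (by norm_num : (0:ℝ) < 1)] with t ht
        exact ht
      filter_upwards [self_mem_nhdsWithin, hpos] with t ht hpt
      simp only [mem_Iio] at ht
      simp only [mem_Ioi]
      nlinarith
  have hA : Tendsto (fun t : ℝ => ((1 - t ^ 2) ^ p)⁻¹) l atTop := inv_pow_tendsto_atTop hp hb
  have hB : Tendsto (fun t : ℝ => ((2 * t) ^ p)⁻¹) l (nhds (((2 * (1:ℝ)) ^ p)⁻¹)) := by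
    have hc : ContinuousAt (fun t : ℝ => ((2 * t) ^ p)⁻¹) 1 := by
      apply ContinuousAt.inv₀ (by fun_prop)
      norm_num
    exact hc.tendsto.mono_left (nhdsWithin_le_nhds (a := (1:ℝ)) (s := Iio 1))
  have hD : Tendsto (fun t : ℝ => ((t ^ 2 + 1) ^ p)⁻¹) l (nhds ((((1:ℝ) ^ 2 + 1) ^ p)⁻¹)) := by
    have hc : ContinuousAt (fun t : ℝ => ((t ^ 2 + 1) ^ p)⁻¹) 1 := by
      apply ContinuousAt.inv₀ (by fun_prop)
      norm_num
    exact hc.tendsto.mono_left (nhdsWithin_le_nhds (a := (1:ℝ)) (s := Iio 1))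
  have hF : Tendsto (fun t : ℝ => 2 * ((t ^ p)⁻¹ - 1) ^ 2) l
      (nhds (2 * (((1:ℝ) ^ p)⁻¹ - 1) ^ 2)) := by
    have hc : ContinuousAt (fun t : ℝ => 2 * ((t ^ p)⁻¹ - 1) ^ 2) 1 := by
      have h : ContinuousAt (fun t : ℝ => (t ^ p)⁻¹) 1 := by
        apply ContinuousAt.inv₀ (by fun_prop)
        norm_num
      fun_prop
    exact hc.tendsto.mono_left (nhdsWithin_le_nhds (a := (1:ℝ)) (s := Iio 1))
  have hcomb : Tendsto (fun t : ℝ => ((1 - t ^ 2) ^ p)⁻¹ +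
      (-(((2 * t) ^ p)⁻¹) + ((t ^ 2 + 1) ^ p)⁻¹ - 2 * ((t ^ p)⁻¹ - 1) ^ 2)) l atTop :=
    hA.atTop_add ((hB.neg.add hD).sub hF)
  exact hcomb.congr (fun t => by simp only [Gf]; ring)

lemma Gf_half {p : ℕ} (hp : 5 ≤ p) : Gf p (1 / 2) < 0 := by
  have e1 : ((1 - (1/2:ℝ) ^ 2) ^ p)⁻¹ = (4/3:ℝ) ^ p := by
    rw [← inv_pow]; norm_num
  have e2 : ((2 * (1/2:ℝ)) ^ p)⁻¹ = 1 := by norm_num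
  have e3 : (((1/2:ℝ) ^ 2 + 1) ^ p)⁻¹ = (4/5:ℝ) ^ p := by
    rw [← inv_pow]; norm_num
  have e4 : (((1/2:ℝ)) ^ p)⁻¹ = (2:ℝ) ^ p := by
    rw [← inv_pow]; norm_num
  have hX : (32:ℝ) ≤ 2 ^ p := by
    calc (32:ℝ) = 2 ^ 5 := by norm_num
    _ ≤ 2 ^ p := pow_le_pow_right₀ one_le_two hp
  have hAle : (4/3:ℝ) ^ p ≤ 2 ^ p := pow_le_pow_left₀ (by norm_num) (by norm_num) p
  have hBle : (4/5:ℝ) ^ p ≤ 1 := pow_le_one₀ (by norm_num) (by norm_num)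
  simp only [Gf, e1, e2, e3, e4]
  nlinarith [mul_nonneg (by linarith : (0:ℝ) ≤ (2:ℝ) ^ p - 32)
    (by linarith : (0:ℝ) ≤ (2:ℝ) ^ p - 1)]

theorem stmt_16 (N : ℕ) (hN : 7 ≤ N) :
    StrictMonoOn (gFun N) (Ioo (0 : ℝ) 1) ∧
    Tendsto (gFun N) (nhdsWithin 0 (Ioi 0)) atBot ∧
    Tendsto (gFun N) (nhdsWithin 1 (Iio 1)) atTop ∧
    gFun N (1 / 2) < 0 ∧
    ∃ tstar : ℝ, tstar ∈ Ioo (0 : ℝ) 1 ∧ gFun N tstar = 0 ∧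
      (∀ s ∈ Ioo (0 : ℝ) 1, gFun N s = 0 → s = tstar) ∧
      1 / 2 < tstar ∧
      (∀ t ∈ Ioo tstar 1, 0 < gFun N t) := by
  set p : ℕ := N - 2 with hpdef
  have hp5 : 5 ≤ p := by omega
  have hp1 : 1 ≤ p := by omega
  have hmono : StrictMonoOn (gFun N) (Ioo (0 : ℝ) 1) := by
    intro s hs t ht hst
    rw [gfun_eq hN hs, gfun_eq hN ht]
    exact Gf_mono hp1 hs ht hst
  have hhalfmem : (1/2 : ℝ) ∈ Ioo (0:ℝ) 1 := by norm_num
  have hhalf : gFun N (1/2) < 0 := by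
    rw [gfun_eq hN hhalfmem]; exact Gf_half hp5
  have hbot : Tendsto (gFun N) (nhdsWithin 0 (Ioi 0)) atBot := by
    apply (Gf_bot hp1).congr'
    have h1 : ∀ᶠ t in nhdsWithin (0:ℝ) (Ioi 0), t < 1 := by
      apply eventually_nhdsWithin_of_eventually_nhds
      filter_upwards [Iio_mem_nhds (by norm_num : (0:ℝ) < 1)] with t ht using ht
    filter_upwards [self_mem_nhdsWithin, h1] with t ht h1t
    exact (gfun_eq hN ⟨ht, h1t⟩).symm
  have htop : Tendsto (gFun N) (nhdsWithin 1 (Iio 1)) atTop := by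
    apply (Gf_top hp1).congr'
    have h1 : ∀ᶠ t in nhdsWithin (1:ℝ) (Iio 1), 0 < t := by
      apply eventually_nhdsWithin_of_eventually_nhds
      filter_upwards [Ioi_mem_nhds (by norm_num : (0:ℝ) < 1)] with t ht using ht
    filter_upwards [self_mem_nhdsWithin, h1] with t ht h1t
    exact (gfun_eq hN ⟨h1t, ht⟩).symm
  refine ⟨hmono, hbot, htop, hhalf, ?_⟩
  -- find a point with positive value
  have hev : ∀ᶠ t in nhdsWithin (1:ℝ) (Iio 1), 0 < gFun N t ∧ 1/2 < t ∧ t < 1 := by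
    have h1 : ∀ᶠ t in nhdsWithin (1:ℝ) (Iio 1), 1/2 < t := by
      apply eventually_nhdsWithin_of_eventually_nhds
      filter_upwards [Ioi_mem_nhds (by norm_num : (1/2:ℝ) < 1)] with t ht using ht
    filter_upwards [htop.eventually_gt_atTop 0, h1, self_mem_nhdsWithin] with t h h1 h2
    exact ⟨h, h1, h2⟩
  obtain ⟨t₀, ht₀pos, ht₀half, ht₀1⟩ := hev.exists
  have ht₀mem : t₀ ∈ Ioo (0:ℝ) 1 := ⟨by linarith, ht₀1⟩
  -- IVT on [1/2, t₀]
  have hsub : Icc (1/2:ℝ) t₀ ⊆ Ioo (0:ℝ) 1 := fun x ⟨h1, h2⟩ => ⟨by linarith, by linarith⟩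
  have hcont : ContinuousOn (gFun N) (Icc (1/2:ℝ) t₀) :=
    (((Gf_cont p).mono hsub).congr (fun t ht => gfun_eq hN (hsub ht)))
  have hivt := intermediate_value_Ioo (by linarith : (1/2:ℝ) ≤ t₀) hcont
  have h0mem : (0:ℝ) ∈ Ioo (gFun N (1/2)) (gFun N t₀) := ⟨hhalf, ht₀pos⟩
  obtain ⟨tstar, htsmem, htszero⟩ := hivt h0mem
  obtain ⟨hts1, hts2⟩ := htsmem
  have htsIoo : tstar ∈ Ioo (0:ℝ) 1 := ⟨by linarith, by linarith⟩
  refine ⟨tstar, htsIoo, htszero, ?_, by linarith, ?_⟩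
  · intro s hs hgs
    exact hmono.injOn hs htsIoo (by rw [hgs, htszero])
  · intro t ⟨ht1, ht2⟩
    have htmem : t ∈ Ioo (0:ℝ) 1 := ⟨by linarith [htsIoo.1], ht2⟩
    have := hmono htsIoo htmem ht1
    rw [htszero] at this
    exact this
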